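/- arXiv:2508.07395 — 3 statements merged into one kernel-verified Lean document; each statement's English description precedes it below -/
import Mathlib

section
/- Let P and Q be real symmetric positive semidefinite n×n matrices and let c ∈ ℝⁿ. Then there do not exist distinct vectors v ≠ w in ℝⁿ satisfying (P·Q)·v + c = w and (P·Q)·w + c = v; i.e., the affine map x ↦ (P·Q)·x + c has no 2-cycle of distinct points. -/
open Matrix

/-- The affine map `x ↦ (P·Q)·x + c`, where `P` and `Q` are real symmetric
positive semidefinite matrices, has no 2-cycle of distinct points. -/
theorem psd_product_affine_no_two_cycle {n : ℕ}
    (P Q : Matrix (Fin n) (Fin n) ℝ)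
    (hP : P.IsSymm) (hQ : Q.IsSymm)
    (hPpsd : ∀ x : Fin n → ℝ, 0 ≤ x ⬝ᵥ P.mulVec x)
    (hQpsd : ∀ x : Fin n → ℝ, 0 ≤ x ⬝ᵥ Q.mulVec x)
    (c : Fin n → ℝ) :
    ¬ ∃ v w : Fin n → ℝ, v ≠ w ∧ (P * Q).mulVec v + c = w ∧ (P * Q).mulVec w + c = v := by
  rintro ⟨v, w, hvw, h1, h2⟩
  set u := v - w with hu
  have hu0 : u ≠ 0 := sub_ne_zero.mpr hvw
  have hQps : Q.PosSemidef := by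
    refine .of_dotProduct_mulVec_nonneg ?_ fun x => ?_
    · show Qᴴ = Q
      exact isHermitian_iff_isSymm.mpr hQ
    simpa using hQpsd x
  -- P*Q*u = -u
  have key : (P * Q) *ᵥ u = -u := by
    have := congrArg₂ (· - ·) h1 h2
    simp only [add_sub_add_right_eq_sub, ← mulVec_sub] at this
    rw [hu]; rw [this]; abel
  -- (Qu)ᵀ P (Qu) = - uᵀ Q u
  have hQu : Q *ᵥ u ⬝ᵥ P *ᵥ (Q *ᵥ u) = - (u ⬝ᵥ Q *ᵥ u) := by
    have h1 : P *ᵥ (Q *ᵥ u) = -u := by rw [mulVec_mulVec, key]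
    rw [h1, dotProduct_neg]
    congr 1
    rw [dotProduct_comm]
  have hp := hPpsd (Q *ᵥ u)
  have hq := hQpsd u
  have hz : u ⬝ᵥ Q *ᵥ u = 0 := by
    rw [hQu] at hp; linarith
  have hQu0 : Q *ᵥ u = 0 := by
    have := (hQps.dotProduct_mulVec_zero_iff u).mp (by simpa using hz)
    exact this
  have : -u = 0 := by rw [← key, ← mulVec_mulVec, hQu0, mulVec_zero]
  exact hu0 (by simpa using this)
end

section
/- Let A₀ and A₁ be real diagonal n×n matrices with nonnegative diagonal entries, let B₀, B₁ ∈ ℝⁿ, and let k, m ≥ 1 be natural numbers. Let f : ℝⁿ → ℝⁿ be the map obtained by applying x ↦ A₀·x + B₀ exactly k times and then applying x ↦ A₁·x + B₁ exactly m times. Then f is an affine map f(x) = (A₁^m · A₀^k)·x + c for some vector c ∈ ℝⁿ, where A₁^m · A₀^k is a diagonal matrix with nonnegative diagonal entries, and consequently there do not exist distinct vectors v ≠ w with f(v) = w and f(w) = v. -/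
/-!
Iterating `x ↦ A x + b` stays affine with linear part a power of `A`, so the composite map is
`x ↦ D x + c` with `D` diagonal and nonnegative. Coordinatewise this is a monotone map of `ℝ`,
and a monotone self-map of a linear order has no 2-cycle: from `v ≤ w` we get
`w = f v ≤ f w = v`.
-/

open Matrix

theorem Monotone.eq_of_apply_eq_swap {α : Type*} [LinearOrder α] {f : α → α} (hf : Monotone f)
    {v w : α} (hv : f v = w) (hw : f w = v) : v = w := by
  rcases le_total v w with h | h
  · exact le_antisymm h (by simpa only [hv, hw] using hf h)
  · exact le_antisymm (by simpa only [hv, hw] using hf h) h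

namespace Matrix

variable {ι R : Type*} [Fintype ι] [DecidableEq ι]

theorem iterate_mulVec_add [Semiring R] (A : Matrix ι ι R) (b : ι → R) (j : ℕ) :
    ∃ c : ι → R, ∀ x, (fun x => A *ᵥ x + b)^[j] x = A ^ j *ᵥ x + c := by
  induction j with
  | zero => exact ⟨0, fun x => by simp⟩
  | succ j ih =>
    obtain ⟨c, hc⟩ := ih
    refine ⟨A *ᵥ c + b, fun x => ?_⟩
    rw [Function.iterate_succ_apply', hc, mulVec_add, mulVec_mulVec, ← pow_succ', add_assoc]

theorem eq_of_diagonal_mulVec_add_eq_swap [Semiring R] [LinearOrder R] [IsOrderedRing R]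
    {d : ι → R} (hd : 0 ≤ d) {c v w : ι → R}
    (hv : diagonal d *ᵥ v + c = w) (hw : diagonal d *ᵥ w + c = v) : v = w := by
  funext i
  have hmono : Monotone fun x => d i * x + c i :=
    (monotone_mul_left_of_nonneg (hd i)).add_const (c i)
  refine hmono.eq_of_apply_eq_swap ?_ ?_
  · simpa only [Pi.add_apply, mulVec_diagonal] using congrFun hv i
  · simpa only [Pi.add_apply, mulVec_diagonal] using congrFun hw i

end Matrix

theorem iterated_nonneg_diagonal_affine_no_two_cycle_general {n : ℕ}
    (A₀ A₁ : Matrix (Fin n) (Fin n) ℝ)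
    (hA₀ : A₀.IsDiag) (hA₁ : A₁.IsDiag)
    (hA₀pos : ∀ i, 0 ≤ A₀ i i) (hA₁pos : ∀ i, 0 ≤ A₁ i i)
    (B₀ B₁ : Fin n → ℝ) (k m : ℕ) :
    ∃ c : Fin n → ℝ,
      (∀ x : Fin n → ℝ,
        ((fun x => A₁.mulVec x + B₁)^[m] ∘ (fun x => A₀.mulVec x + B₀)^[k]) x
          = (A₁ ^ m * A₀ ^ k).mulVec x + c) ∧
      (A₁ ^ m * A₀ ^ k).IsDiag ∧
      (∀ i, 0 ≤ (A₁ ^ m * A₀ ^ k) i i) ∧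
      ¬ ∃ v w : Fin n → ℝ, v ≠ w ∧
        ((fun x => A₁.mulVec x + B₁)^[m] ∘ (fun x => A₀.mulVec x + B₀)^[k]) v = w ∧
        ((fun x => A₁.mulVec x + B₁)^[m] ∘ (fun x => A₀.mulVec x + B₀)^[k]) w = v := by
  obtain ⟨d₀, rfl⟩ : ∃ d, A₀ = diagonal d := ⟨_, hA₀.diagonal_diag.symm⟩
  obtain ⟨d₁, rfl⟩ : ∃ d, A₁ = diagonal d := ⟨_, hA₁.diagonal_diag.symm⟩
  simp only [diagonal_apply_eq] at hA₀pos hA₁pos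
  have hprod : diagonal d₁ ^ m * diagonal d₀ ^ k = diagonal (d₁ ^ m * d₀ ^ k) := by
    rw [diagonal_pow, diagonal_pow, diagonal_mul_diagonal]
    rfl
  have hprod_nonneg : 0 ≤ d₁ ^ m * d₀ ^ k := fun i =>
    mul_nonneg (pow_nonneg (hA₁pos i) m) (pow_nonneg (hA₀pos i) k)
  obtain ⟨c₀, hc₀⟩ := iterate_mulVec_add (diagonal d₀) B₀ k
  obtain ⟨c₁, hc₁⟩ := iterate_mulVec_add (diagonal d₁) B₁ m
  have hf : ∀ x, ((fun x => diagonal d₁ *ᵥ x + B₁)^[m] ∘ (fun x => diagonal d₀ *ᵥ x + B₀)^[k]) x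
      = (diagonal d₁ ^ m * diagonal d₀ ^ k) *ᵥ x + (diagonal d₁ ^ m *ᵥ c₀ + c₁) := fun x => by
    rw [Function.comp_apply, hc₀, hc₁, mulVec_add, mulVec_mulVec, add_assoc]
  refine ⟨_, hf, hprod ▸ isDiag_diagonal _, fun i => ?_, ?_⟩
  · rw [hprod, diagonal_apply_eq]
    exact hprod_nonneg i
  · rintro ⟨v, w, hne, hv, hw⟩
    rw [hf, hprod] at hv hw
    exact hne (eq_of_diagonal_mulVec_add_eq_swap hprod_nonneg hv hw)

/-- Applying the affine map `x ↦ A₀·x + B₀` exactly `k` times and then the affine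
map `x ↦ A₁·x + B₁` exactly `m` times, where `A₀, A₁` are nonnegative diagonal
real matrices, gives an affine map with linear part `A₁^m · A₀^k`, which is a
nonnegative diagonal matrix; consequently this composite map has no 2-cycle of
distinct points. -/
theorem iterated_nonneg_diagonal_affine_no_two_cycle {n : ℕ}
    (A₀ A₁ : Matrix (Fin n) (Fin n) ℝ)
    (hA₀ : A₀.IsDiag) (hA₁ : A₁.IsDiag)
    (hA₀pos : ∀ i, 0 ≤ A₀ i i) (hA₁pos : ∀ i, 0 ≤ A₁ i i)
    (B₀ B₁ : Fin n → ℝ) (k m : ℕ) (hk : 1 ≤ k) (hm : 1 ≤ m) :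
    ∃ c : Fin n → ℝ,
      (∀ x : Fin n → ℝ,
        ((fun x => A₁.mulVec x + B₁)^[m] ∘ (fun x => A₀.mulVec x + B₀)^[k]) x
          = (A₁ ^ m * A₀ ^ k).mulVec x + c) ∧
      (A₁ ^ m * A₀ ^ k).IsDiag ∧
      (∀ i, 0 ≤ (A₁ ^ m * A₀ ^ k) i i) ∧
      ¬ ∃ v w : Fin n → ℝ, v ≠ w ∧
        ((fun x => A₁.mulVec x + B₁)^[m] ∘ (fun x => A₀.mulVec x + B₀)^[k]) v = w ∧
        ((fun x => A₁.mulVec x + B₁)^[m] ∘ (fun x => A₀.mulVec x + B₀)^[k]) w = v :=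
  iterated_nonneg_diagonal_affine_no_two_cycle_general A₀ A₁ hA₀ hA₁ hA₀pos hA₁pos B₀ B₁ k m
end

section
/- Fix an integer n ≥ 1 and set A = exp(2πi/n) and B = 1 − A in ℂ. Let (x_t)_{t≥1} be a sequence with x_t ∈ {0, 1}, and define h : ℕ → ℂ by h₀ = 1 and h_t = A·h_{t−1} + B·x_t. For each t let z_t be the number of indices 1 ≤ i ≤ t with x_i = 0 (and z₀ = 0). Suppose that for every t with x_t = 1, n divides z_{t−1} (i.e., a one may only occur after a completed block of zeros of length a multiple of n). Then for all t, h_t = A^{z_t}, and consequently h_t = 1 if and only if n divides z_t. -/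
/-!
While reading ones the state rests at `h = 1`, a fixed point of `h ↦ A h + (1 - A)`;
each zero multiplies the state by `A`. Hence `h_t = A ^ z_t`, where a one can only be read
when `A ^ z_t = 1`, i.e. in the rest state. Since `A` is a primitive `n`-th root of unity,
`A ^ z_t = 1` exactly when `n ∣ z_t`.
-/

theorem Finset.card_filter_Icc_one_succ (p : ℕ → Prop) [DecidablePred p] (t : ℕ) :
    ((Finset.Icc 1 (t + 1)).filter p).card =
      ((Finset.Icc 1 t).filter p).card + if p (t + 1) then 1 else 0 := by
  rw [← Finset.insert_Icc_right_eq_Icc_add_one (by omega : 1 ≤ t + 1), Finset.filter_insert]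
  split_ifs <;> simp [Finset.card_insert_of_notMem]

theorem eq_pow_count_zeros_of_linear_recurrence {R : Type*} [CommRing R] {n : ℕ} {A : R}
    (hAn : A ^ n = 1) {x : ℕ → ℕ} (hx : ∀ t, x t = 0 ∨ x t = 1) {h : ℕ → R} (h0 : h 0 = 1)
    (hrec : ∀ t, h (t + 1) = A * h t + (1 - A) * x (t + 1)) {z : ℕ → ℕ} (hz0 : z 0 = 0)
    (hzrec : ∀ t, z (t + 1) = z t + if x (t + 1) = 0 then 1 else 0)
    (hones : ∀ t, x (t + 1) = 1 → n ∣ z t) (t : ℕ) :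
    h t = A ^ z t := by
  induction t with
  | zero => rw [h0, hz0, pow_zero]
  | succ t ih =>
    rcases hx (t + 1) with hzero | hone
    · rw [hrec, ih, hzrec, hzero, if_pos rfl, Nat.cast_zero, mul_zero, add_zero, pow_succ, mul_comm]
    · obtain ⟨k, hk⟩ := hones t hone
      have hrest : A ^ z t = 1 := by rw [hk, pow_mul, hAn, one_pow]
      rw [hrec, ih, hzrec, hone, if_neg one_ne_zero, add_zero, hrest, Nat.cast_one]
      ring

/-- Analytic solution of the offset prediction task by a scalar complex linear
recurrence: with `A = exp(2πi/n)`, `B = 1 − A`, binary inputs `x_t` such that a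
one may only occur after a completed block of zeros of length a multiple of `n`,
the state satisfies `h_t = A^{z_t}` where `z_t` counts the zeros among
`x_1, …, x_t`; in particular `h_t = 1` iff `n ∣ z_t`. -/
theorem offset_prediction_solution
    (n : ℕ) (hn : 1 ≤ n)
    (A B : ℂ)
    (hA : A = Complex.exp (2 * Real.pi * Complex.I / n))
    (hB : B = 1 - A)
    (x : ℕ → ℕ) (hx : ∀ t, x t = 0 ∨ x t = 1)
    (h : ℕ → ℂ) (h0 : h 0 = 1)
    (hrec : ∀ t : ℕ, h (t + 1) = A * h t + B * (x (t + 1) : ℂ))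
    (z : ℕ → ℕ)
    (hz : ∀ t : ℕ, z t = ((Finset.Icc 1 t).filter (fun i => x i = 0)).card)
    (hones : ∀ t : ℕ, 1 ≤ t → x t = 1 → n ∣ z (t - 1)) :
    ∀ t : ℕ, h t = A ^ (z t) ∧ (h t = 1 ↔ n ∣ z t) := by
  have hprim : IsPrimitiveRoot A n := hA ▸ Complex.isPrimitiveRoot_exp n (by omega)
  have hstate : ∀ t, h t = A ^ z t :=
    eq_pow_count_zeros_of_linear_recurrence hprim.pow_eq_one hx h0 (hB ▸ hrec)
      (by simp [hz]) (fun t => by rw [hz, hz, Finset.card_filter_Icc_one_succ])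
      (fun t => hones (t + 1) (by omega))
  intro t
  rw [hstate t]
  exact ⟨rfl, hprim.pow_eq_one_iff_dvd (z t)⟩
end
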